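/- arXiv:1112.1125 — 3 statements merged into one kernel-verified Lean document; each statement's English description precedes it below -/
import Mathlib

section
/- (Theorem 1.) Let A and S be nonempty finite sets. Let μ be a probability measure on the space of CMC kernels (A × S) → Δ(S), and let T̂ be its componentwise barycenter, T̂_{a,s}(s') = ∫ Θ_{a,s}(s') dμ(Θ); assume every T̂_{a,s} is strictly positive. Then for every CMC kernel Φ all of whose transition distributions Φ_{a,s} are strictly positive, ∫ (I_M(Θ‖Φ) − I_M(Θ‖T̂)) dμ(Θ) = ∑_{a∈A, s∈S} D_KL(T̂_{a,s}‖Φ_{a,s}) ≥ 0. Consequently the Bayesian estimate T̂ minimizes the expected missing information E_{Θ∼μ}[I_M(Θ‖Φ)] over all strictly positive kernels Φ. -/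
open MeasureTheory

/-!
The excess `I_M(Θ‖Φ) - I_M(Θ‖T̂) = ∑ Θ_{a,s}(s') log₂ (T̂_{a,s}(s') / Φ_{a,s}(s'))` is linear
in `Θ`, so its expectation is obtained by substituting the barycenter `T̂` for `Θ`, which gives
`∑ D_KL(T̂_{a,s}‖Φ_{a,s})`. As a barycenter of probability vectors, each `T̂_{a,s}` is a
probability vector, and Gibbs' inequality makes the sum nonnegative.
-/

namespace Real

lemma sub_le_mul_log_div {p q : ℝ} (hp : 0 ≤ p) (hq : 0 < q) : p - q ≤ p * log (p / q) := by
  rcases hp.eq_or_lt with rfl | hp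
  · simpa using hq.le
  · have hlog : 1 - q / p ≤ log (p / q) := by
      simpa only [inv_div] using one_sub_inv_le_log_of_pos (div_pos hp hq)
    calc p - q = p * (1 - q / p) := by field_simp
      _ ≤ p * log (p / q) := mul_le_mul_of_nonneg_left hlog hp.le

lemma sum_mul_logb_div_nonneg {ι : Type*} [Fintype ι] {b : ℝ} (hb : 1 < b) {p q : ι → ℝ}
    (hp : ∀ i, 0 ≤ p i) (hq : ∀ i, 0 < q i) (hpq : ∑ i, q i ≤ ∑ i, p i) :
    0 ≤ ∑ i, p i * logb b (p i / q i) := by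
  have hlog : 0 ≤ ∑ i, p i * log (p i / q i) := calc
    0 ≤ ∑ i, (p i - q i) := by rw [Finset.sum_sub_distrib]; linarith
    _ ≤ _ := Finset.sum_le_sum fun i _ => sub_le_mul_log_div (hp i) (hq i)
  have hlogb : ∑ i, p i * logb b (p i / q i) = (∑ i, p i * log (p i / q i)) / log b := by
    simp only [logb, Finset.sum_div, mul_div_assoc]
  rw [hlogb]
  exact div_nonneg hlog (log_pos hb).le

lemma mul_logb_div_sub_mul_logb_div (b p : ℝ) {q r : ℝ} (hq : q ≠ 0) (hr : r ≠ 0) :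
    p * logb b (p / q) - p * logb b (p / r) = p * logb b (r / q) := by
  rcases eq_or_ne p 0 with rfl | hp
  · simp
  · rw [logb_div hp hq, logb_div hp hr, logb_div hr hq]
    ring

end Real

section Barycenter

variable {Ω ι : Type*} [MeasurableSpace Ω] [Fintype ι] {μ : Measure Ω} {X : Ω → ι → ℝ}

lemma integrable_apply_of_ae_mem_stdSimplex [IsFiniteMeasure μ] (hX : AEMeasurable X μ)
    (h : ∀ᵐ ω ∂μ, X ω ∈ stdSimplex ℝ ι) (i : ι) : Integrable (fun ω => X ω i) μ :=
  (integrable_const (1 : ℝ)).mono' (hX.eval i).aestronglyMeasurable <| h.mono fun ω hω => by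
    obtain ⟨h0, h1⟩ := mem_Icc_of_mem_stdSimplex hω i
    rwa [Real.norm_of_nonneg h0]

lemma integral_mem_stdSimplex [IsProbabilityMeasure μ] (hX : AEMeasurable X μ)
    (h : ∀ᵐ ω ∂μ, X ω ∈ stdSimplex ℝ ι) : (fun i => ∫ ω, X ω i ∂μ) ∈ stdSimplex ℝ ι := by
  refine ⟨fun i => integral_nonneg_of_ae (h.mono fun ω hω => hω.1 i), ?_⟩
  rw [← integral_finsetSum _ fun i _ => integrable_apply_of_ae_mem_stdSimplex hX h i,
    integral_congr_ae (h.mono fun ω hω => hω.2)]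
  simp

end Barycenter

theorem bayes_kernel_minimizes_expected_missing_information_general
    {A S : Type*} [Fintype A] [Fintype S]
    (μ : Measure (A × S → S → ℝ)) [IsProbabilityMeasure μ]
    (hsupp : ∀ᵐ Θ ∂μ, ∀ as : A × S, (∀ s', 0 ≤ Θ as s') ∧ ∑ s', Θ as s' = 1)
    (That : A × S → S → ℝ)
    (hThat : ∀ (as : A × S) (s' : S), That as s' = ∫ Θ, Θ as s' ∂μ)
    (hThat_pos : ∀ (as : A × S) (s' : S), 0 < That as s')
    (Φ : A × S → S → ℝ)
    (hΦ0 : ∀ (as : A × S) (s' : S), 0 < Φ as s')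
    (hΦ1 : ∀ as : A × S, ∑ s', Φ as s' = 1) :
    (∫ Θ, ((∑ as : A × S, ∑ s', Θ as s' * Real.logb 2 (Θ as s' / Φ as s'))
         - (∑ as : A × S, ∑ s', Θ as s' * Real.logb 2 (Θ as s' / That as s'))) ∂μ)
      = ∑ as : A × S, ∑ s', That as s' * Real.logb 2 (That as s' / Φ as s')
    ∧ 0 ≤ ∑ as : A × S, ∑ s', That as s' * Real.logb 2 (That as s' / Φ as s') := by
  have hmeas (as : A × S) : AEMeasurable (fun Θ : A × S → S → ℝ => Θ as) μ :=
    (measurable_pi_apply as).aemeasurable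
  have hsimplex (as : A × S) : ∀ᵐ Θ ∂μ, Θ as ∈ stdSimplex ℝ S := hsupp.mono fun _ h => h as
  have hint (as : A × S) := integrable_apply_of_ae_mem_stdSimplex (hmeas as) (hsimplex as)
  have hThat_mem (as : A × S) : That as ∈ stdSimplex ℝ S := by
    convert integral_mem_stdSimplex (hmeas as) (hsimplex as) using 1
    exact funext (hThat as)
  constructor
  · simp_rw [← Finset.sum_sub_distrib,
      Real.mul_logb_div_sub_mul_logb_div _ _ (hΦ0 _ _).ne' (hThat_pos _ _).ne']
    rw [integral_finsetSum _ fun as _ => integrable_finsetSum _ fun s' _ =>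
      (hint as s').mul_const _]
    simp_rw [integral_finsetSum _ fun s' _ => (hint _ s').mul_const _, integral_mul_const,
      ← hThat]
  · refine Finset.sum_nonneg fun as _ =>
      Real.sum_mul_logb_div_nonneg one_lt_two (hThat_mem as).1 (hΦ0 as) ?_
    rw [hΦ1, (hThat_mem as).2]

/-- **Theorem 1 of the paper.** Let `A`, `S` be nonempty finite
sets and `μ` a probability measure on CMC kernels `(A × S) → Δ(S)` (supported
on kernels all of whose transition distributions are probability vectors),
with componentwise barycenter `T̂ (a,s) s' = ∫ Θ, Θ (a,s) s' ∂μ`, every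
`T̂ (a,s)` strictly positive.  Then for every kernel `Φ` with all transition
distributions strictly positive probability vectors,
`∫ (I_M(Θ‖Φ) − I_M(Θ‖T̂)) dμ = ∑_{a,s} D_KL(T̂_{a,s}‖Φ_{a,s}) ≥ 0`,
so the Bayesian estimate `T̂` minimizes the expected missing information. -/
theorem bayes_kernel_minimizes_expected_missing_information
    {A S : Type*} [Fintype A] [Nonempty A] [Fintype S] [Nonempty S]
    (μ : Measure (A × S → S → ℝ)) [IsProbabilityMeasure μ]
    (hsupp : ∀ᵐ Θ ∂μ, ∀ as : A × S, (∀ s', 0 ≤ Θ as s') ∧ ∑ s', Θ as s' = 1)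
    (That : A × S → S → ℝ)
    (hThat : ∀ (as : A × S) (s' : S), That as s' = ∫ Θ, Θ as s' ∂μ)
    (hThat_pos : ∀ (as : A × S) (s' : S), 0 < That as s')
    (Φ : A × S → S → ℝ)
    (hΦ0 : ∀ (as : A × S) (s' : S), 0 < Φ as s')
    (hΦ1 : ∀ as : A × S, ∑ s', Φ as s' = 1) :
    (∫ Θ, ((∑ as : A × S, ∑ s', Θ as s' * Real.logb 2 (Θ as s' / Φ as s'))
         - (∑ as : A × S, ∑ s', Θ as s' * Real.logb 2 (Θ as s' / That as s'))) ∂μ)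
      = ∑ as : A × S, ∑ s', That as s' * Real.logb 2 (That as s' / Φ as s')
    ∧ 0 ≤ ∑ as : A × S, ∑ s', That as s' * Real.logb 2 (That as s' / Φ as s') :=
  bayes_kernel_minimizes_expected_missing_information_general μ hsupp That hThat hThat_pos Φ hΦ0 hΦ1
end

section
/- (Theorem 2.) Let S be a nonempty finite set and let μ be a probability measure on the simplex Δ(S) (the posterior over the unknown transition distribution, given past data) whose barycenter p̂ is strictly positive. For each s* ∈ S define the updated model p̂^{s*}(s') = (∫_{Δ(S)} θ(s*)·θ(s') dμ(θ)) / p̂(s*), and assume each p̂^{s*} is strictly positive. Then the expected information gain of sampling one outcome — where the true distribution θ is drawn from μ and the outcome s* is drawn from θ, and the realized information gain is I_G(s*, θ) = ∑_{s'∈S} θ(s')·log₂(p̂^{s*}(s')/p̂(s')) — equals the predicted information gain PIG computable from the models alone: ∫_{Δ(S)} ∑_{s*∈S} θ(s*)·(∑_{s'∈S} θ(s')·log₂(p̂^{s*}(s')/p̂(s'))) dμ(θ) = ∑_{s*∈S} p̂(s*)·(∑_{s'∈S} p̂^{s*}(s')·log₂(p̂^{s*}(s')/p̂(s'))). -/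
/-!
Both sides are linear in the second-moment matrix `M a b = ∫ θ a * θ b ∂μ`: expanding the
left side as `∑ a b, (∫ θ a * θ b ∂μ) * log₂ (p̂^{a} b / p̂ b)` (coordinates of points of the
simplex are bounded, so every product `θ a * θ b` is integrable) and using
`p̂ a * p̂^{a} b = M a b` on the right side gives the same double sum.
-/

open MeasureTheory

theorem integrable_apply_mul_apply_of_ae_mem_stdSimplex {ι : Type*} [Fintype ι]
    {μ : Measure (ι → ℝ)} [IsFiniteMeasure μ] (hμ : ∀ᵐ θ ∂μ, θ ∈ stdSimplex ℝ ι) (a b : ι) :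
    Integrable (fun θ : ι → ℝ => θ a * θ b) μ := by
  refine Integrable.mono' (integrable_const 1)
    ((measurable_pi_apply a).mul (measurable_pi_apply b)).aestronglyMeasurable ?_
  filter_upwards [hμ] with θ hθ
  obtain ⟨ha₀, ha₁⟩ := mem_Icc_of_mem_stdSimplex hθ a
  obtain ⟨hb₀, hb₁⟩ := mem_Icc_of_mem_stdSimplex hθ b
  rw [norm_mul, Real.norm_of_nonneg ha₀, Real.norm_of_nonneg hb₀]
  exact mul_le_one₀ ha₁ hb₀ hb₁

theorem integral_sum_apply_mul_sum_apply_mul {ι : Type*} [Fintype ι] {μ : Measure (ι → ℝ)}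
    (hint : ∀ a b, Integrable (fun θ : ι → ℝ => θ a * θ b) μ) (c : ι → ι → ℝ) :
    ∫ θ, ∑ a, θ a * ∑ b, θ b * c a b ∂μ = ∑ a, ∑ b, (∫ θ, θ a * θ b ∂μ) * c a b := by
  have hint' : ∀ a b, Integrable (fun θ : ι → ℝ => θ a * (θ b * c a b)) μ := fun a b => by
    simpa only [mul_assoc] using (hint a b).mul_const (c a b)
  simp_rw [Finset.mul_sum]
  rw [integral_finsetSum _ fun a _ => integrable_finsetSum _ fun b _ => hint' a b]
  refine Finset.sum_congr rfl fun a _ => ?_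
  rw [integral_finsetSum _ fun b _ => hint' a b]
  refine Finset.sum_congr rfl fun b _ => ?_
  simp_rw [← mul_assoc]
  exact integral_mul_const _ _

theorem expected_information_gain_eq_PIG_general
    {S : Type*} [Fintype S]
    (μ : Measure (S → ℝ)) [IsProbabilityMeasure μ]
    (hsupp : ∀ᵐ θ ∂μ, (∀ s, 0 ≤ θ s) ∧ ∑ s, θ s = 1)
    (phat : S → ℝ)
    (hphat_pos : ∀ s, 0 < phat s)
    (phats : S → S → ℝ)
    (hphats : ∀ sstar s' : S, phats sstar s' = (∫ θ, θ sstar * θ s' ∂μ) / phat sstar) :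
    (∫ θ, ∑ sstar, θ sstar *
        (∑ s', θ s' * Real.logb 2 (phats sstar s' / phat s')) ∂μ)
      = ∑ sstar, phat sstar *
          (∑ s', phats sstar s' * Real.logb 2 (phats sstar s' / phat s')) := by
  rw [integral_sum_apply_mul_sum_apply_mul
    (integrable_apply_mul_apply_of_ae_mem_stdSimplex hsupp)]
  refine Finset.sum_congr rfl fun sstar _ => ?_
  rw [Finset.mul_sum]
  refine Finset.sum_congr rfl fun s' _ => ?_
  rw [hphats sstar s', ← mul_assoc, mul_div_cancel₀ _ (hphat_pos sstar).ne']

/-- **Theorem 2 of the paper.** Let `μ` be a probability measure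
supported on the simplex `Δ(S)` (the posterior over the unknown transition
distribution) whose barycenter `p̂` is strictly positive, and for each
`s* ∈ S` let `p̂^{s*} s' = (∫ θ, θ s* · θ s' ∂μ) / p̂ s*` be the updated model,
assumed strictly positive.  Then the expected information gain — with `θ ∼ μ`,
outcome `s* ∼ θ`, and realized gain `∑ s', θ s' · log₂ (p̂^{s*} s' / p̂ s')` —
equals the predicted information gain computable from the models alone:
`∫ ∑ s*, θ s* · (∑ s', θ s' · log₂ (p̂^{s*} s' / p̂ s')) dμ(θ)
   = ∑ s*, p̂ s* · (∑ s', p̂^{s*} s' · log₂ (p̂^{s*} s' / p̂ s'))`. -/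
theorem expected_information_gain_eq_PIG
    {S : Type*} [Fintype S] [Nonempty S]
    (μ : Measure (S → ℝ)) [IsProbabilityMeasure μ]
    (hsupp : ∀ᵐ θ ∂μ, (∀ s, 0 ≤ θ s) ∧ ∑ s, θ s = 1)
    (phat : S → ℝ) (hphat : ∀ s, phat s = ∫ θ, θ s ∂μ)
    (hphat_pos : ∀ s, 0 < phat s)
    (phats : S → S → ℝ)
    (hphats : ∀ sstar s' : S, phats sstar s' = (∫ θ, θ sstar * θ s' ∂μ) / phat sstar)
    (hphats_pos : ∀ sstar s' : S, 0 < phats sstar s') :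
    (∫ θ, ∑ sstar, θ sstar *
        (∑ s', θ s' * Real.logb 2 (phats sstar s' / phat s')) ∂μ)
      = ∑ sstar, phat sstar *
          (∑ s', phats sstar s' * Real.logb 2 (phats sstar s' / phat s')) :=
  expected_information_gain_eq_PIG_general μ hsupp phat hphat_pos phats hphats
end

section
/- Let S be a nonempty finite set and let μ be a probability measure on the simplex Δ(S) whose barycenter p̂ is strictly positive. For each s* ∈ S define p̂^{s*}(s') = (∫_{Δ(S)} θ(s*)·θ(s') dμ(θ)) / p̂(s*), and assume each p̂^{s*} is strictly positive. Then the predicted information gain is bounded by the entropy of the current model: ∑_{s*∈S} p̂(s*)·(∑_{s'∈S} p̂^{s*}(s')·log₂(p̂^{s*}(s')/p̂(s'))) ≤ −∑_{s∈S} p̂(s)·log₂ p̂(s). -/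
/-!
Write `q a b = p̂ a · p̂^a b = ∫ θ a · θ b dμ`. Since almost every `θ` sums to one, `q` is a joint
distribution whose two marginals are both `p̂`, and `p̂^a` is the conditional law of the second
coordinate given the first. The predicted information gain is then the mutual information
`H(p̂) - ∑ a, p̂ a · H(p̂^a)`, which is at most `H(p̂)` because conditional entropies are nonnegative.
-/

open MeasureTheory Finset

section Information

variable {S : Type*} [Fintype S] {c : ℝ}

theorem sum_mul_logb_self_nonpos (hc : 1 < c) {q : S → ℝ} (hq : ∀ s, 0 ≤ q s)
    (hsum : ∑ s, q s = 1) : ∑ s, q s * Real.logb c (q s) ≤ 0 := by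
  refine sum_nonpos fun s _ => mul_nonpos_of_nonneg_of_nonpos (hq s) ?_
  refine Real.logb_nonpos hc (hq s) ?_
  exact hsum ▸ single_le_sum (fun t _ => hq t) (mem_univ s)

theorem sum_mul_sum_mul_eq_of_sum_mul_eq {p : S → ℝ} {K : S → S → ℝ}
    (hcol : ∀ b, ∑ a, p a * K a b = p b) (f : S → ℝ) :
    ∑ a, p a * ∑ b, K a b * f b = ∑ b, p b * f b := by
  simp only [mul_sum, ← mul_assoc]
  rw [sum_comm]
  simp only [← sum_mul, hcol]

theorem sum_mul_sum_mul_logb_div_le_neg_sum_mul_logb (hc : 1 < c) {p : S → ℝ} {K : S → S → ℝ}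
    (hp : ∀ s, 0 < p s) (hK : ∀ a b, 0 ≤ K a b) (hrow : ∀ a, ∑ b, K a b = 1)
    (hcol : ∀ b, ∑ a, p a * K a b = p b) :
    ∑ a, p a * ∑ b, K a b * Real.logb c (K a b / p b) ≤ -∑ b, p b * Real.logb c (p b) := by
  have hsplit : ∀ a b, K a b * Real.logb c (K a b / p b)
      = K a b * Real.logb c (K a b) - K a b * Real.logb c (p b) := by
    intro a b
    rcases (hK a b).eq_or_lt with hzero | hpos
    · simp [← hzero]
    · rw [Real.logb_div hpos.ne' (hp b).ne', mul_sub]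
  have hcond : ∑ a, p a * ∑ b, K a b * Real.logb c (K a b) ≤ 0 :=
    sum_nonpos fun a _ =>
      mul_nonpos_of_nonneg_of_nonpos (hp a).le (sum_mul_logb_self_nonpos hc (hK a) (hrow a))
  simp only [hsplit, sum_sub_distrib, mul_sub]
  rw [sum_mul_sum_mul_eq_of_sum_mul_eq hcol]
  linarith

end Information

section Simplex

variable {S : Type*} [Fintype S] {μ : Measure (S → ℝ)}

theorem integrable_apply_mul_apply_of_ae_simplex [IsFiniteMeasure μ]
    (hsupp : ∀ᵐ θ ∂μ, (∀ s, 0 ≤ θ s) ∧ ∑ s, θ s = 1) (a b : S) :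
    Integrable (fun θ : S → ℝ => θ a * θ b) μ := by
  refine Integrable.of_bound
    ((continuous_apply a).mul (continuous_apply b)).aestronglyMeasurable 1 ?_
  filter_upwards [hsupp] with θ ⟨hnonneg, hsum⟩
  have hle : ∀ s, θ s ≤ 1 := fun s =>
    hsum ▸ single_le_sum (fun t _ => hnonneg t) (mem_univ s)
  rw [Real.norm_eq_abs, abs_of_nonneg (mul_nonneg (hnonneg a) (hnonneg b))]
  exact mul_le_one₀ (hle a) (hnonneg b) (hle b)

theorem sum_integral_apply_mul_apply_of_ae_simplex [IsFiniteMeasure μ]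
    (hsupp : ∀ᵐ θ ∂μ, (∀ s, 0 ≤ θ s) ∧ ∑ s, θ s = 1) (a : S) :
    ∑ b, ∫ θ, θ a * θ b ∂μ = ∫ θ, θ a ∂μ := by
  rw [← integral_finsetSum _ fun b _ => integrable_apply_mul_apply_of_ae_simplex hsupp a b]
  refine integral_congr_ae ?_
  filter_upwards [hsupp] with θ hθ
  rw [← mul_sum, hθ.2, mul_one]

end Simplex

theorem PIG_le_entropy_general
    {S : Type*} [Fintype S]
    (μ : Measure (S → ℝ)) [IsProbabilityMeasure μ]
    (hsupp : ∀ᵐ θ ∂μ, (∀ s, 0 ≤ θ s) ∧ ∑ s, θ s = 1)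
    (phat : S → ℝ) (hphat : ∀ s, phat s = ∫ θ, θ s ∂μ)
    (hphat_pos : ∀ s, 0 < phat s)
    (phats : S → S → ℝ)
    (hphats : ∀ sstar s' : S, phats sstar s' = (∫ θ, θ sstar * θ s' ∂μ) / phat sstar) :
    (∑ sstar, phat sstar *
        (∑ s', phats sstar s' * Real.logb 2 (phats sstar s' / phat s')))
      ≤ -∑ s, phat s * Real.logb 2 (phat s) := by
  have hjoint : ∀ a b, phat a * phats a b = ∫ θ, θ a * θ b ∂μ := fun a b => by
    rw [hphats, mul_div_cancel₀ _ (hphat_pos a).ne']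
  refine sum_mul_sum_mul_logb_div_le_neg_sum_mul_logb one_lt_two hphat_pos
    (fun a b => ?nonneg) (fun a => ?row) (fun b => ?col)
  case nonneg =>
    rw [hphats]
    refine div_nonneg (integral_nonneg_of_ae ?_) (hphat_pos a).le
    filter_upwards [hsupp] with θ hθ
    exact mul_nonneg (hθ.1 a) (hθ.1 b)
  case row =>
    refine mul_left_cancel₀ (hphat_pos a).ne' ?_
    rw [mul_sum, mul_one]
    simp only [hjoint]
    rw [sum_integral_apply_mul_apply_of_ae_simplex hsupp a, hphat]
  case col =>
    rw [hphat, ← sum_integral_apply_mul_apply_of_ae_simplex hsupp b]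
    refine sum_congr rfl fun a _ => ?_
    simp only [hjoint, mul_comm]

/-- Let `μ` be a probability measure supported on the simplex
`Δ(S)` with strictly positive barycenter `p̂`, and for each `s* ∈ S` let
`p̂^{s*} s' = (∫ θ, θ s* · θ s' ∂μ) / p̂ s*`, assumed strictly positive.  Then
the predicted information gain is bounded by the entropy of the current model:
`∑ s*, p̂ s* · (∑ s', p̂^{s*} s' · log₂ (p̂^{s*} s' / p̂ s'))
   ≤ −∑ s, p̂ s · log₂ (p̂ s)`. -/
theorem PIG_le_entropy
    {S : Type*} [Fintype S] [Nonempty S]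
    (μ : Measure (S → ℝ)) [IsProbabilityMeasure μ]
    (hsupp : ∀ᵐ θ ∂μ, (∀ s, 0 ≤ θ s) ∧ ∑ s, θ s = 1)
    (phat : S → ℝ) (hphat : ∀ s, phat s = ∫ θ, θ s ∂μ)
    (hphat_pos : ∀ s, 0 < phat s)
    (phats : S → S → ℝ)
    (hphats : ∀ sstar s' : S, phats sstar s' = (∫ θ, θ sstar * θ s' ∂μ) / phat sstar)
    (hphats_pos : ∀ sstar s' : S, 0 < phats sstar s') :
    (∑ sstar, phat sstar *
        (∑ s', phats sstar s' * Real.logb 2 (phats sstar s' / phat s')))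
      ≤ -∑ s, phat s * Real.logb 2 (phat s) :=
  PIG_le_entropy_general μ hsupp phat hphat hphat_pos phats hphats
end
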